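/- Let ψ : ℝ → ℂ be continuously differentiable and compactly supported, and let s(t) = A e^{pt + (q/2)t²} e^{2πi(ct + (r/2)t²)} be an LFM signal with A ∈ ℂ, p, q, c, r ∈ ℝ. Define W_s(a, b) = ∫_ℝ s(b + at) conj(ψ(t)) dt and W^{ψ₁}_s(a, b) = ∫_ℝ s(b + at) t conj(ψ(t)) dt (the CWT with ψ₁(t) = t ψ(t)). Then for every a, b ∈ ℝ the partial derivative in b of W_s exists and ∂_b W_s(a, b) = (p + qb + 2πi(c + rb)) W_s(a, b) + (q + 2πir) a W^{ψ₁}_s(a, b). -/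

import Mathlib

/-!
Writing the chirp as `s u = A exp(α u + β u² / 2)` with `α = p + 2πic` and `β = q + 2πir`, one has
`s' u = (α + β u) s u`. Differentiating under the integral sign (legitimate because `ψ` has compact
support) gives `∂_b W_s(a, b) = ∫ (α + β (b + a t)) s(b + a t) conj(ψ t) dt`, which splits into
`(α + β b) W_s(a, b) + β a W^{ψ₁}_s(a, b)`.
-/

open Real MeasureTheory

theorem hasDerivAt_integral_comp_add_mul {R : Type*} [NormedRing R] [NormedAlgebra ℝ R]
    {f f' g : ℝ → R} (hf : ∀ x, HasDerivAt f (f' x) x) (hf' : Continuous f')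
    (hg : Continuous g) (hgs : HasCompactSupport g) (a b : ℝ) :
    HasDerivAt (fun x => ∫ t, f (x + a * t) * g t) (∫ t, f' (b + a * t) * g t) b := by
  have hfc : Continuous f := continuous_iff_continuousAt.2 fun x => (hf x).continuousAt
  obtain ⟨M, hM⟩ : ∃ M, ∀ y ∈ Metric.closedBall b 1 ×ˢ tsupport g, ‖f' (y.1 + a * y.2)‖ ≤ M :=
    ((isCompact_closedBall b 1).prod hgs).exists_bound_of_continuousOn (by fun_prop)
  have h_bound : ∀ᵐ t, ∀ x ∈ Metric.ball b 1, ‖f' (x + a * t) * g t‖ ≤ M * ‖g t‖ := by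
    refine .of_forall fun t x hx => ?_
    by_cases ht : t ∈ tsupport g
    · exact (norm_mul_le _ _).trans <| mul_le_mul_of_nonneg_right
        (hM (x, t) ⟨Metric.ball_subset_closedBall hx, ht⟩) (norm_nonneg _)
    · simp [image_eq_zero_of_notMem_tsupport ht]
  have h_diff : ∀ᵐ t, ∀ x ∈ Metric.ball b 1,
      HasDerivAt (fun x => f (x + a * t) * g t) (f' (x + a * t) * g t) x :=
    .of_forall fun t x _ => ((hf _).comp_add_const x (a * t)).mul_const (g t)
  exact (hasDerivAt_integral_of_dominated_loc_of_deriv_le (Metric.ball_mem_nhds b one_pos)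
    (.of_forall fun x => (by fun_prop : Continuous _).aestronglyMeasurable)
    ((by fun_prop : Continuous _).integrable_of_hasCompactSupport hgs.mul_left)
    (by fun_prop : Continuous _).aestronglyMeasurable h_bound
    ((hg.integrable_of_hasCompactSupport hgs).norm.const_mul M) h_diff).2

theorem hasDerivAt_const_mul_cexp_quadratic (A α β : ℂ) (u : ℝ) :
    HasDerivAt (fun v : ℝ => A * Complex.exp (α * v + β / 2 * v ^ 2))
      ((α + β * u) * (A * Complex.exp (α * u + β / 2 * u ^ 2))) u := by
  have hv : HasDerivAt (fun v : ℝ => (v : ℂ)) 1 u := (hasDerivAt_id u).ofReal_comp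
  have hquad : HasDerivAt (fun v : ℝ => α * v + β / 2 * (v : ℂ) ^ 2) (α + β * u) u :=
    ((hv.const_mul α).fun_add ((hv.fun_pow 2).const_mul (β / 2))).congr_deriv
      (by push_cast; ring)
  exact (hquad.cexp.const_mul A).congr_deriv (by ring)

/-- Time derivative of the CWT of an LFM signal:
`∂_b W_s(a,b) = (p+qb+2πi(c+rb)) W_s(a,b) + (q+2πir) a W^{ψ₁}_s(a,b)`. -/
theorem cwt_time_derivative_lfm
    (ψ : ℝ → ℂ) (hψ : ContDiff ℝ 1 ψ) (hψsupp : HasCompactSupport ψ)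
    (A : ℂ) (p q c r : ℝ)
    (s : ℝ → ℂ)
    (hs : ∀ t : ℝ, s t = A * Complex.exp (((p * t + q / 2 * t ^ 2 : ℝ) : ℂ)) *
      Complex.exp (2 * π * Complex.I * (c * t + r / 2 * t ^ 2)))
    (W W1 : ℝ → ℝ → ℂ)
    (hW : ∀ a b : ℝ, W a b = ∫ t : ℝ, s (b + a * t) * starRingEnd ℂ (ψ t))
    (hW1 : ∀ a b : ℝ, W1 a b = ∫ t : ℝ, s (b + a * t) * (t : ℂ) * starRingEnd ℂ (ψ t)) :
    ∀ a b : ℝ, HasDerivAt (fun b' => W a b')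
      (((p : ℂ) + q * b + 2 * π * Complex.I * ((c : ℂ) + r * b)) * W a b
        + ((q : ℂ) + 2 * π * Complex.I * r) * a * W1 a b) b := by
  intro a b
  set α : ℂ := p + 2 * π * Complex.I * c
  set β : ℂ := q + 2 * π * Complex.I * r
  have hs_eq : s = fun u : ℝ => A * Complex.exp (α * u + β / 2 * u ^ 2) := by
    funext u
    rw [hs u, mul_assoc, ← Complex.exp_add]
    congr 2
    simp only [α, β]
    push_cast
    ring
  have hs_deriv (u : ℝ) : HasDerivAt s ((α + β * u) * s u) u := by
    rw [hs_eq]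
    exact hasDerivAt_const_mul_cexp_quadratic A α β u
  have hg : Continuous fun t => starRingEnd ℂ (ψ t) := Complex.continuous_conj.comp hψ.continuous
  have hgs : HasCompactSupport fun t => starRingEnd ℂ (ψ t) := hψsupp.comp_left (map_zero _)
  have hW_int : Integrable fun t : ℝ => s (b + a * t) * starRingEnd ℂ (ψ t) :=
    (by rw [hs_eq]; fun_prop : Continuous _).integrable_of_hasCompactSupport hgs.mul_left
  have hW1_int : Integrable fun t : ℝ => s (b + a * t) * (t : ℂ) * starRingEnd ℂ (ψ t) :=
    (by rw [hs_eq]; fun_prop : Continuous _).integrable_of_hasCompactSupport hgs.mul_left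
  have hderiv := hasDerivAt_integral_comp_add_mul hs_deriv
    (by rw [hs_eq]; fun_prop) hg hgs a b
  simp only [← hW] at hderiv
  refine hderiv.congr_deriv ?_
  calc _ = ∫ t : ℝ, (α + β * b) * (s (b + a * t) * starRingEnd ℂ (ψ t))
        + β * a * (s (b + a * t) * (t : ℂ) * starRingEnd ℂ (ψ t)) := by
          congr 1 with t
          push_cast
          ring
    _ = _ := by
          rw [integral_add (hW_int.const_mul _) (hW1_int.const_mul _), integral_const_mul,
            integral_const_mul, ← hW, ← hW1]
          ring
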